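/- Let w be a pin sequence whose ⊞-interior C^⊞_w contains the two single-point centred permutations in quadrants 1 and 3 (i.e., w visits quadrants 1 and 3 recurrently). Then C^⊞_w also contains a single-point centred permutation in quadrant 2 or in quadrant 4; consequently every ⊞-interior of a pin class satisfies the adjacency condition. -/

import Mathlib

/-- A *centred permutation*: `vals` is the one-line notation of the filled-in
permutation (length `n+1`), `origin` the index of the origin point. -/
structure CPerm where
  vals : List ℕ
  origin : ℕ
deriving DecidableEq

namespace CPerm

/-- Length of a centred permutation (origin does not count). -/
def len (p : CPerm) : ℕ := p.vals.length - 1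

/-- A genuine centred permutation: one-line notation is a permutation of
`{0, …, N-1}` and the origin index is in range. -/
def IsValid (p : CPerm) : Prop :=
  p.vals ≠ [] ∧ p.origin < p.vals.length ∧ p.vals.Perm (List.range p.vals.length)

def valAt (p : CPerm) (i : ℕ) : ℕ := p.vals.getD i 0

def originVal (p : CPerm) : ℕ := p.valAt p.origin

/-- The box-sum `p ⊞ q`: inflate the origin of `q` by a copy of `p`. -/
def boxSum (p q : CPerm) : CPerm :=
  let N := p.vals.length
  let v := q.originVal
  let shift : ℕ → ℕ := fun u => if u < v then u else u + (N - 1)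
  ⟨(q.vals.take q.origin).map shift ++ p.vals.map (· + v) ++
      (q.vals.drop (q.origin + 1)).map shift,
    q.origin + p.origin⟩

/-- The trivial centred permutation (origin only, length 0). -/
def trivial : CPerm := ⟨[0], 0⟩

/-- Iterated box-sum `σ₁ ⊞ σ₂ ⊞ ⋯ ⊞ σₙ`. -/
def boxSumList (l : List CPerm) : CPerm := l.foldr boxSum trivial

/-- `p` is ⊞-indecomposable: nonempty and not a box-sum of two strictly smaller
centred permutations. -/
def BoxIndecomposable (p : CPerm) : Prop :=
  1 ≤ p.len ∧
    ¬∃ a b : CPerm, a.IsValid ∧ b.IsValid ∧ 1 ≤ a.len ∧ 1 ≤ b.len ∧ boxSum a b = p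

/-- The non-origin point at index `i` of `p` lies in quadrant `q` (1–4,
numbered anticlockwise). -/
def InQuadrant (p : CPerm) (q : ℕ) (i : ℕ) : Prop :=
  i < p.vals.length ∧ i ≠ p.origin ∧
    ((q = 1 ∧ p.origin < i ∧ p.originVal < p.valAt i) ∨
     (q = 2 ∧ i < p.origin ∧ p.originVal < p.valAt i) ∨
     (q = 3 ∧ i < p.origin ∧ p.valAt i < p.originVal) ∨
     (q = 4 ∧ p.origin < i ∧ p.valAt i < p.originVal))

/-- All non-origin points of `p` lie in quadrant `q`. -/
def OneQuadrant (p : CPerm) (q : ℕ) : Prop :=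
  ∀ i, i < p.vals.length → i ≠ p.origin → InQuadrant p q i

def OppositeQuadrants (q₁ q₂ : ℕ) : Prop :=
  (q₁ = 1 ∧ q₂ = 3) ∨ (q₁ = 3 ∧ q₂ = 1) ∨ (q₁ = 2 ∧ q₂ = 4) ∨ (q₁ = 4 ∧ q₂ = 2)

/-- Centred pattern containment `p ≤ q` (origins must match up). -/
def PatternLE (p q : CPerm) : Prop :=
  ∃ f : ℕ → ℕ,
    (∀ i j, i < p.vals.length → j < p.vals.length → i < j → f i < f j) ∧
    (∀ i, i < p.vals.length → f i < q.vals.length) ∧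
    f p.origin = q.origin ∧
    (∀ i j, i < p.vals.length → j < p.vals.length →
      (p.valAt i < p.valAt j ↔ q.valAt (f i) < q.valAt (f j)))

/-- A centred permutation class: nonempty, consisting of valid centred
permutations, and downward closed under centred containment. -/
def IsClass (S : Set CPerm) : Prop :=
  S.Nonempty ∧ (∀ p ∈ S, p.IsValid) ∧
    ∀ p q : CPerm, q ∈ S → p.IsValid → PatternLE p q → p ∈ S

/-- `S` is closed under the box-sum. -/
def BoxClosed (S : Set CPerm) : Prop := ∀ p ∈ S, ∀ q ∈ S, boxSum p q ∈ S

/-- Number of centred permutations of length `n` in `S`. -/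
noncomputable def count (S : Set CPerm) (n : ℕ) : ℕ := {p | p ∈ S ∧ p.len = n}.ncard

/-- The single-point centred permutation in quadrant `q`. -/
def mu : ℕ → CPerm
  | 1 => ⟨[0, 1], 0⟩
  | 2 => ⟨[1, 0], 1⟩
  | 3 => ⟨[0, 1], 1⟩
  | 4 => ⟨[1, 0], 0⟩
  | _ => ⟨[0], 0⟩

def AdjacentQuadrants (a b : ℕ) : Prop :=
  (a, b) = (1, 2) ∨ (a, b) = (2, 3) ∨ (a, b) = (3, 4) ∨ (a, b) = (4, 1) ∨
  (a, b) = (2, 1) ∨ (a, b) = (3, 2) ∨ (a, b) = (4, 3) ∨ (a, b) = (1, 4)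

/-- The adjacency condition on a centred class. -/
def AdjacencyCondition (S : Set CPerm) : Prop :=
  (∃! q : ℕ, q ∈ ({1, 2, 3, 4} : Set ℕ) ∧ mu q ∈ S) ∨
    ∃ a b : ℕ, AdjacentQuadrants a b ∧ mu a ∈ S ∧ mu b ∈ S

end CPerm

inductive PinLetter | u | d | l | r
deriving DecidableEq

def PinLetter.isVert : PinLetter → Bool
  | .u => true
  | .d => true
  | .l => false
  | .r => false

/-- Letters strictly alternate between vertical and horizontal alignment. -/
def PinAlt (ls : List PinLetter) : Prop :=
  List.Chain' (fun a b => a.isVert ≠ b.isVert) ls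

/-- A pin word: an initial numeral `q ∈ {1,…,4}` followed by alternating letters. -/
def IsPinWord (q : ℕ) (ls : List PinLetter) : Prop := 1 ≤ q ∧ q ≤ 4 ∧ PinAlt ls

def firstPt : ℕ → ℚ × ℚ
  | 1 => (1, 1)
  | 2 => (-1, 1)
  | 3 => (-1, -1)
  | 4 => (1, -1)
  | _ => (1, 1)

def maxOf (l : List ℚ) : ℚ := l.foldr max 0
def minOf (l : List ℚ) : ℚ := l.foldr min 0

/-- Place the next pin: beyond the bounding rectangle in the given direction,
separating the previous point from all the others. The list holds the points
newest-first; the origin `(0,0)` is the last entry. -/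
def pinStep (pts : List (ℚ × ℚ)) (dir : PinLetter) : List (ℚ × ℚ) :=
  let last := pts.headD (0, 0)
  let rest := pts.tail
  let btwY : ℚ :=
    if maxOf (rest.map Prod.snd) < last.2 then (last.2 + maxOf (rest.map Prod.snd)) / 2
    else (last.2 + minOf (rest.map Prod.snd)) / 2
  let btwX : ℚ :=
    if maxOf (rest.map Prod.fst) < last.1 then (last.1 + maxOf (rest.map Prod.fst)) / 2
    else (last.1 + minOf (rest.map Prod.fst)) / 2
  let np : ℚ × ℚ :=
    match dir with
    | .r => (maxOf (pts.map Prod.fst) + 1, btwY)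
    | .l => (minOf (pts.map Prod.fst) - 1, btwY)
    | .u => (btwX, maxOf (pts.map Prod.snd) + 1)
    | .d => (btwX, minOf (pts.map Prod.snd) - 1)
  np :: pts

/-- The points (newest first, origin last) drawn from a pin word. -/
def pinPts (q : ℕ) (ls : List PinLetter) : List (ℚ × ℚ) :=
  ls.foldl pinStep [firstPt q, (0, 0)]

/-- Convert a finite set of plane points (with origin `(0,0)`) into a centred
permutation in canonical form. -/
def toCPerm (pts : List (ℚ × ℚ)) : CPerm :=
  ⟨(pts.mergeSort (fun a b => decide (a.1 ≤ b.1))).map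
      (fun pt => ((pts.map Prod.snd).filter (fun y => decide (y < pt.2))).length),
    ((pts.map Prod.fst).filter (fun x => decide (x < 0))).length⟩

/-- The centred pin permutation of a pin word. -/
def pinPerm (q : ℕ) (ls : List PinLetter) : CPerm := toCPerm (pinPts q ls)

/-- The complete pin class `P°`: the downward closure of all box-sums of
centred pin permutations. -/
def CompletePinClass : Set CPerm :=
  {p | p.IsValid ∧
    ∃ ws : List (ℕ × List PinLetter), (∀ w ∈ ws, IsPinWord w.1 w.2) ∧
      CPerm.PatternLE p (CPerm.boxSumList (ws.map fun w => pinPerm w.1 w.2))}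

/-- An infinite pin sequence: numeral `q` and letters `f 0, f 1, …`,
alternating in alignment. -/
def IsPinSeq (q : ℕ) (f : ℕ → PinLetter) : Prop :=
  1 ≤ q ∧ q ≤ 4 ∧ ∀ n, (f n).isVert ≠ (f (n + 1)).isVert

def seqPrefix (f : ℕ → PinLetter) (n : ℕ) : List PinLetter := (List.range n).map f

/-- The pin class of an infinite pin sequence. -/
def PinClassOf (q : ℕ) (f : ℕ → PinLetter) : Set CPerm :=
  {p | p.IsValid ∧ ∃ n : ℕ, CPerm.PatternLE p (pinPerm q (seqPrefix f n))}

/-- The `i`-th point (`i ≥ 1`) placed when drawing the pin sequence. -/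
def seqPoint (q : ℕ) (f : ℕ → PinLetter) (i : ℕ) : ℚ × ℚ :=
  (pinPts q (seqPrefix f (i - 1))).headD (0, 0)

/-- The quadrant of a plane point. -/
def quadOf (pt : ℚ × ℚ) : ℕ :=
  if 0 < pt.1 then (if 0 < pt.2 then 1 else 4) else (if 0 < pt.2 then 2 else 3)

/-- The pin word `w` is the pin factor of the sequence starting at position `i ≥ 1`
(first letter replaced by the quadrant of the corresponding point). -/
def FactorAt (q : ℕ) (f : ℕ → PinLetter) (i : ℕ) (w : ℕ × List PinLetter) : Prop :=
  1 ≤ i ∧ w.1 = quadOf (seqPoint q f i) ∧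
    ∀ t, t < w.2.length → w.2.getD t PinLetter.u = f (i - 1 + t)

/-- A recurrent pin factor: one occurring arbitrarily late. -/
def RecurrentFactor (q : ℕ) (f : ℕ → PinLetter) (w : ℕ × List PinLetter) : Prop :=
  ∀ N : ℕ, ∃ i, N ≤ i ∧ FactorAt q f i w

/-- The ⊞-interior of a pin class: the ⊞-closure (as a class) of the
permutations generated by recurrent pin factors. -/
def BoxInterior (q : ℕ) (f : ℕ → PinLetter) : Set CPerm :=
  {p | p.IsValid ∧
    ∃ l : List CPerm,
      (∀ x ∈ l, ∃ w : ℕ × List PinLetter, RecurrentFactor q f w ∧ x = pinPerm w.1 w.2) ∧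
      CPerm.PatternLE p (CPerm.boxSumList l)}

namespace PinProof

/-- quadrant transition function -/
def qtrans (c : ℕ) : PinLetter → ℕ
  | .r => if c = 1 ∨ c = 2 then 1 else 4
  | .l => if c = 1 ∨ c = 2 then 2 else 3
  | .u => if c = 1 ∨ c = 4 then 1 else 2
  | .d => if c = 1 ∨ c = 4 then 4 else 3

def quadWalk (c : ℕ) (w : List PinLetter) : ℕ := w.foldl qtrans c

lemma quadWalk_append (c : ℕ) (w w' : List PinLetter) :
    quadWalk c (w ++ w') = quadWalk (quadWalk c w) w' := List.foldl_append

lemma qtrans_range (c : ℕ) (a : PinLetter) : 1 ≤ qtrans c a ∧ qtrans c a ≤ 4 := by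
  cases a <;> simp [qtrans] <;> split_ifs <;> omega

lemma quadWalk_range {c : ℕ} (h1 : 1 ≤ c) (h4 : c ≤ 4) (w : List PinLetter) :
    1 ≤ quadWalk c w ∧ quadWalk c w ≤ 4 := by
  induction w generalizing c with
  | nil => exact ⟨h1, h4⟩
  | cons a w ih => exact ih (qtrans_range c a).1 (qtrans_range c a).2

lemma quadOf_range (pt : ℚ × ℚ) : 1 ≤ quadOf pt ∧ quadOf pt ≤ 4 := by
  unfold quadOf; split_ifs <;> omega

lemma maxOf_nonneg (l : List ℚ) : 0 ≤ maxOf l := by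
  induction l with
  | nil => simp [maxOf]
  | cons x l ih => exact le_trans ih (le_max_right x _)

lemma minOf_nonpos (l : List ℚ) : minOf l ≤ 0 := by
  induction l with
  | nil => simp [minOf]
  | cons x l ih => exact le_trans (min_le_right x _) ih

lemma le_maxOf {a : ℚ} {l : List ℚ} (h : a ∈ l) : a ≤ maxOf l := by
  induction l with
  | nil => simp at h
  | cons x l ih =>
    rcases List.mem_cons.1 h with rfl | h
    · exact le_max_left _ _
    · exact le_trans (ih h) (le_max_right _ _)

lemma minOf_le {a : ℚ} {l : List ℚ} (h : a ∈ l) : minOf l ≤ a := by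
  induction l with
  | nil => simp at h
  | cons x l ih =>
    rcases List.mem_cons.1 h with rfl | h
    · exact min_le_left _ _
    · exact le_trans (min_le_right _ _) (ih h)

/-- head is vertically separated from the rest, on the same side as the origin line -/
def VE (pts : List (ℚ × ℚ)) : Prop :=
  (maxOf (pts.tail.map Prod.snd) < (pts.headD (0,0)).2 ∧ 0 < (pts.headD (0,0)).2) ∨
  ((pts.headD (0,0)).2 < minOf (pts.tail.map Prod.snd) ∧ (pts.headD (0,0)).2 < 0)

def HE (pts : List (ℚ × ℚ)) : Prop :=
  (maxOf (pts.tail.map Prod.fst) < (pts.headD (0,0)).1 ∧ 0 < (pts.headD (0,0)).1) ∨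
  ((pts.headD (0,0)).1 < minOf (pts.tail.map Prod.fst) ∧ (pts.headD (0,0)).1 < 0)

lemma step_horiz {h : ℚ × ℚ} {t : List (ℚ × ℚ)} (hVE : VE (h :: t))
    (h0 : ((0:ℚ),(0:ℚ)) ∈ h :: t)
    (hx : ((h :: t).map Prod.fst).Nodup) (hy : ((h :: t).map Prod.snd).Nodup)
    {a : PinLetter} (ha : a.isVert = false) :
    ((0:ℚ),(0:ℚ)) ∈ pinStep (h :: t) a ∧
    ((pinStep (h :: t) a).map Prod.fst).Nodup ∧
    ((pinStep (h :: t) a).map Prod.snd).Nodup ∧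
    HE (pinStep (h :: t) a) ∧
    quadOf ((pinStep (h :: t) a).headD (0,0)) = qtrans (quadOf h) a := by
  have hM := maxOf_nonneg (t.map Prod.snd)
  have hm := minOf_nonpos (t.map Prod.snd)
  set M := maxOf (t.map Prod.snd) with hMdef
  set m := minOf (t.map Prod.snd) with hmdef
  set btwY : ℚ := if M < h.2 then (h.2 + M)/2 else (h.2 + m)/2 with hbtwdef
  have hbtw : (M < btwY ∧ btwY < h.2 ∧ 0 < btwY ∧ 0 < h.2) ∨
      (btwY < m ∧ h.2 < btwY ∧ btwY < 0 ∧ h.2 < 0) := by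
    rcases hVE with ⟨h1, h2⟩ | ⟨h1, h2⟩
    · simp only [List.headD_cons, List.tail_cons] at h1 h2
      rw [hbtwdef, if_pos h1]
      left; refine ⟨by linarith, by linarith, by linarith, h2⟩
    · simp only [List.headD_cons, List.tail_cons] at h1 h2
      rw [hbtwdef, if_neg (by linarith)]
      right; refine ⟨by linarith, by linarith, by linarith, h2⟩
  have hYne : ∀ y ∈ (h :: t).map Prod.snd, y ≠ btwY := by
    intro y hy'
    rcases List.mem_cons.1 hy' with rfl | hy'
    · rcases hbtw with ⟨_, h2, _, _⟩ | ⟨_, h2, _, _⟩ <;> · intro he; rw [he] at h2; exact absurd h2 (lt_irrefl _)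
    · rcases hbtw with ⟨h1, _, _, _⟩ | ⟨h1, _, _, _⟩
      · exact ne_of_lt (lt_of_le_of_lt (le_maxOf hy') h1)
      · exact ne_of_gt (lt_of_lt_of_le h1 (minOf_le hy'))
  have hYsign : (0 < btwY ↔ 0 < h.2) := by
    rcases hbtw with ⟨_, _, h3, h4⟩ | ⟨_, _, h3, h4⟩
    · exact ⟨fun _ => h4, fun _ => h3⟩
    · constructor <;> (intro hc; linarith)
  cases a with
  | u => simp [PinLetter.isVert] at ha
  | d => simp [PinLetter.isVert] at ha
  | r =>
    have hstep : pinStep (h :: t) PinLetter.r =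
        (maxOf ((h :: t).map Prod.fst) + 1, btwY) :: h :: t := by
      simp only [pinStep, List.headD_cons, List.tail_cons]
      rfl
    set np : ℚ × ℚ := (maxOf ((h :: t).map Prod.fst) + 1, btwY) with hnp
    have hXbig : ∀ x ∈ (h :: t).map Prod.fst, x < np.1 := by
      intro x hx'
      exact lt_of_le_of_lt (le_maxOf hx') (by simp [hnp])
    have hnp1 : 0 < np.1 := lt_of_le_of_lt (maxOf_nonneg ((h :: t).map Prod.fst)) (lt_add_one _)
    rw [hstep]
    refine ⟨List.mem_cons_of_mem _ h0, ?_, ?_, ?_, ?_⟩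
    · rw [List.map_cons, List.nodup_cons]
      exact ⟨fun hc => absurd (hXbig _ hc) (lt_irrefl _), hx⟩
    · rw [List.map_cons, List.nodup_cons]
      exact ⟨fun hc => (hYne _ hc rfl).elim, hy⟩
    · left
      simp only [List.headD_cons, List.tail_cons]
      exact ⟨lt_add_one (maxOf ((h :: t).map Prod.fst)), hnp1⟩
    · have hnpq : quadOf np = if 0 < h.2 then 1 else 4 := by
        simp only [quadOf, if_pos hnp1]
        by_cases h2 : 0 < h.2
        · rw [if_pos h2, if_pos (hYsign.2 h2)]
        · rw [if_neg h2, if_neg (fun hc => h2 (hYsign.1 hc))]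
      rw [List.headD_cons, hnpq]
      by_cases h1 : 0 < h.1 <;> by_cases h2 : 0 < h.2 <;>
        simp [qtrans, quadOf, h1, h2]
  | l =>
    have hstep : pinStep (h :: t) PinLetter.l =
        (minOf ((h :: t).map Prod.fst) - 1, btwY) :: h :: t := by
      simp only [pinStep, List.headD_cons, List.tail_cons]
      rfl
    set np : ℚ × ℚ := (minOf ((h :: t).map Prod.fst) - 1, btwY) with hnp
    have hXsmall : ∀ x ∈ (h :: t).map Prod.fst, np.1 < x := by
      intro x hx'
      exact lt_of_lt_of_le (by simp [hnp]) (minOf_le hx')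
    have hnp1 : np.1 < 0 := lt_of_lt_of_le (sub_one_lt _) (minOf_nonpos ((h :: t).map Prod.fst))
    rw [hstep]
    refine ⟨List.mem_cons_of_mem _ h0, ?_, ?_, ?_, ?_⟩
    · rw [List.map_cons, List.nodup_cons]
      exact ⟨fun hc => absurd (hXsmall _ hc) (lt_irrefl _), hx⟩
    · rw [List.map_cons, List.nodup_cons]
      exact ⟨fun hc => (hYne _ hc rfl).elim, hy⟩
    · right
      simp only [List.headD_cons, List.tail_cons]
      exact ⟨sub_one_lt (minOf ((h :: t).map Prod.fst)), hnp1⟩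
    · have hnpq : quadOf np = if 0 < h.2 then 2 else 3 := by
        simp only [quadOf, if_neg (not_lt.2 (le_of_lt hnp1))]
        by_cases h2 : 0 < h.2
        · rw [if_pos h2, if_pos (hYsign.2 h2)]
        · rw [if_neg h2, if_neg (fun hc => h2 (hYsign.1 hc))]
      rw [List.headD_cons, hnpq]
      by_cases h1 : 0 < h.1 <;> by_cases h2 : 0 < h.2 <;>
        simp [qtrans, quadOf, h1, h2]

end PinProof

namespace PinProof

lemma step_vert {h : ℚ × ℚ} {t : List (ℚ × ℚ)} (hHE : HE (h :: t))
    (h0 : ((0:ℚ),(0:ℚ)) ∈ h :: t)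
    (hx : ((h :: t).map Prod.fst).Nodup) (hy : ((h :: t).map Prod.snd).Nodup)
    {a : PinLetter} (ha : a.isVert = true) :
    ((0:ℚ),(0:ℚ)) ∈ pinStep (h :: t) a ∧
    ((pinStep (h :: t) a).map Prod.fst).Nodup ∧
    ((pinStep (h :: t) a).map Prod.snd).Nodup ∧
    VE (pinStep (h :: t) a) ∧
    quadOf ((pinStep (h :: t) a).headD (0,0)) = qtrans (quadOf h) a := by
  have hM := maxOf_nonneg (t.map Prod.fst)
  have hm := minOf_nonpos (t.map Prod.fst)
  set M := maxOf (t.map Prod.fst) with hMdef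
  set m := minOf (t.map Prod.fst) with hmdef
  set btwX : ℚ := if M < h.1 then (h.1 + M)/2 else (h.1 + m)/2 with hbtwdef
  have hbtw : (M < btwX ∧ btwX < h.1 ∧ 0 < btwX ∧ 0 < h.1) ∨
      (btwX < m ∧ h.1 < btwX ∧ btwX < 0 ∧ h.1 < 0) := by
    rcases hHE with ⟨h1, h2⟩ | ⟨h1, h2⟩
    · simp only [List.headD_cons, List.tail_cons] at h1 h2
      rw [hbtwdef, if_pos h1]
      left; refine ⟨by linarith, by linarith, by linarith, h2⟩
    · simp only [List.headD_cons, List.tail_cons] at h1 h2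
      rw [hbtwdef, if_neg (by linarith)]
      right; refine ⟨by linarith, by linarith, by linarith, h2⟩
  have hXne : ∀ x ∈ (h :: t).map Prod.fst, x ≠ btwX := by
    intro x hx'
    rcases List.mem_cons.1 hx' with rfl | hx'
    · rcases hbtw with ⟨_, h2, _, _⟩ | ⟨_, h2, _, _⟩ <;>
        · intro he; rw [he] at h2; exact absurd h2 (lt_irrefl _)
    · rcases hbtw with ⟨h1, _, _, _⟩ | ⟨h1, _, _, _⟩
      · exact ne_of_lt (lt_of_le_of_lt (le_maxOf hx') h1)
      · exact ne_of_gt (lt_of_lt_of_le h1 (minOf_le hx'))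
  have hXsign : (0 < btwX ↔ 0 < h.1) := by
    rcases hbtw with ⟨_, _, h3, h4⟩ | ⟨_, _, h3, h4⟩
    · exact ⟨fun _ => h4, fun _ => h3⟩
    · constructor <;> (intro hc; linarith)
  cases a with
  | r => simp [PinLetter.isVert] at ha
  | l => simp [PinLetter.isVert] at ha
  | u =>
    have hstep : pinStep (h :: t) PinLetter.u =
        (btwX, maxOf ((h :: t).map Prod.snd) + 1) :: h :: t := by
      simp only [pinStep, List.headD_cons, List.tail_cons]
      rfl
    set np : ℚ × ℚ := (btwX, maxOf ((h :: t).map Prod.snd) + 1) with hnp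
    have hYbig : ∀ y ∈ (h :: t).map Prod.snd, y < np.2 := by
      intro y hy'
      exact lt_of_le_of_lt (le_maxOf hy') (lt_add_one _)
    have hnp2 : 0 < np.2 :=
      lt_of_le_of_lt (maxOf_nonneg ((h :: t).map Prod.snd)) (lt_add_one _)
    rw [hstep]
    refine ⟨List.mem_cons_of_mem _ h0, ?_, ?_, ?_, ?_⟩
    · rw [List.map_cons, List.nodup_cons]
      exact ⟨fun hc => (hXne _ hc rfl).elim, hx⟩
    · rw [List.map_cons, List.nodup_cons]
      exact ⟨fun hc => absurd (hYbig _ hc) (lt_irrefl _), hy⟩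
    · left
      simp only [List.headD_cons, List.tail_cons]
      exact ⟨lt_add_one (maxOf ((h :: t).map Prod.snd)), hnp2⟩
    · have hnpq : quadOf np = if 0 < h.1 then 1 else 2 := by
        simp only [quadOf, if_pos hnp2]
        by_cases h1 : 0 < h.1
        · rw [if_pos (hXsign.2 h1), if_pos h1]
        · rw [if_neg (fun hc => h1 (hXsign.1 hc)), if_neg h1]
      rw [List.headD_cons, hnpq]
      by_cases h1 : 0 < h.1 <;> by_cases h2 : 0 < h.2 <;>
        simp [qtrans, quadOf, h1, h2]
  | d =>
    have hstep : pinStep (h :: t) PinLetter.d =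
        (btwX, minOf ((h :: t).map Prod.snd) - 1) :: h :: t := by
      simp only [pinStep, List.headD_cons, List.tail_cons]
      rfl
    set np : ℚ × ℚ := (btwX, minOf ((h :: t).map Prod.snd) - 1) with hnp
    have hYsmall : ∀ y ∈ (h :: t).map Prod.snd, np.2 < y := by
      intro y hy'
      exact lt_of_lt_of_le (sub_one_lt _) (minOf_le hy')
    have hnp2 : np.2 < 0 :=
      lt_of_lt_of_le (sub_one_lt _) (minOf_nonpos ((h :: t).map Prod.snd))
    rw [hstep]
    refine ⟨List.mem_cons_of_mem _ h0, ?_, ?_, ?_, ?_⟩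
    · rw [List.map_cons, List.nodup_cons]
      exact ⟨fun hc => (hXne _ hc rfl).elim, hx⟩
    · rw [List.map_cons, List.nodup_cons]
      exact ⟨fun hc => absurd (hYsmall _ hc) (lt_irrefl _), hy⟩
    · right
      simp only [List.headD_cons, List.tail_cons]
      exact ⟨sub_one_lt (minOf ((h :: t).map Prod.snd)), hnp2⟩
    · have hnpq : quadOf np = if 0 < h.1 then 4 else 3 := by
        simp only [quadOf, if_neg (not_lt.2 (le_of_lt hnp2))]
        by_cases h1 : 0 < h.1
        · rw [if_pos (hXsign.2 h1), if_pos h1]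
        · rw [if_neg (fun hc => h1 (hXsign.1 hc)), if_neg h1]
      rw [List.headD_cons, hnpq]
      by_cases h1 : 0 < h.1 <;> by_cases h2 : 0 < h.2 <;>
        simp [qtrans, quadOf, h1, h2]

lemma pinPts_concat (q : ℕ) (w : List PinLetter) (a : PinLetter) :
    pinPts q (w ++ [a]) = pinStep (pinPts q w) a := by
  simp [pinPts, List.foldl_append]

def lastVert (w : List PinLetter) : Prop := ∀ a ∈ w.getLast?, a.isVert = true
def lastHoriz (w : List PinLetter) : Prop := ∀ a ∈ w.getLast?, a.isVert = false

lemma pin_invariant {q : ℕ} (hq1 : 1 ≤ q) (hq4 : q ≤ 4) :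
    ∀ w : List PinLetter, PinAlt w →
      (((0:ℚ),(0:ℚ)) ∈ pinPts q w) ∧
      ((pinPts q w).map Prod.fst).Nodup ∧ ((pinPts q w).map Prod.snd).Nodup ∧
      (lastVert w → VE (pinPts q w)) ∧ (lastHoriz w → HE (pinPts q w)) ∧
      quadOf ((pinPts q w).headD (0,0)) = quadWalk q w := by
  intro w
  induction w using List.reverseRecOn with
  | nil =>
    intro _
    have hpp : pinPts q [] = [firstPt q, (0,0)] := rfl
    have hqw : quadWalk q [] = q := rfl
    rw [hpp, hqw]
    interval_cases q <;>
      exact ⟨by decide, by decide, by decide, fun _ => by unfold VE; decide, fun _ => by unfold HE; decide, by decide⟩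
  | append_singleton w a ih =>
    intro halt
    rw [PinAlt, List.Chain', List.isChain_append] at halt
    obtain ⟨hw_alt, -, hrel⟩ := halt
    obtain ⟨h0, hx, hy, hVEc, hHEc, hquad⟩ := ih hw_alt
    have hqw : quadWalk q (w ++ [a]) = qtrans (quadWalk q w) a := by
      rw [quadWalk_append]; rfl
    obtain ⟨hd, tl, hpts⟩ : ∃ hd tl, pinPts q w = hd :: tl := by
      cases hmem : pinPts q w with
      | nil => rw [hmem] at h0; simp at h0
      | cons hd tl => exact ⟨hd, tl, rfl⟩
    have hlastne : ∀ x ∈ w.getLast?, x.isVert ≠ a.isVert := by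
      intro x hx'
      exact hrel x hx' a (by simp)
    rw [pinPts_concat]
    cases hvert : a.isVert with
    | false =>
      have hVE : VE (pinPts q w) := hVEc (fun x hx' => by
        have := hlastne x hx'
        rw [hvert] at this
        simpa using this)
      rw [hpts] at hVE h0 hx hy hquad ⊢
      obtain ⟨m0, mx, my, mHE, mq⟩ := step_horiz hVE h0 hx hy hvert
      refine ⟨m0, mx, my, fun hlv => ?_, fun _ => mHE, ?_⟩
      · exfalso
        have := hlv a (by rw [List.getLast?_concat]; rfl)
        rw [hvert] at this; exact absurd this (by decide)
      · rw [mq, hqw, ← hquad, List.headD_cons]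
    | true =>
      have hHE : HE (pinPts q w) := hHEc (fun x hx' => by
        have := hlastne x hx'
        rw [hvert] at this
        simpa using this)
      rw [hpts] at hHE h0 hx hy hquad ⊢
      obtain ⟨m0, mx, my, mVE, mq⟩ := step_vert hHE h0 hx hy hvert
      refine ⟨m0, mx, my, fun _ => mVE, fun hlh => ?_, ?_⟩
      · exfalso
        have := hlh a (by rw [List.getLast?_concat]; rfl)
        rw [hvert] at this; exact absurd this (by decide)
      · rw [mq, hqw, ← hquad, List.headD_cons]

end PinProof

namespace PinProof

def OK (p : CPerm) : Prop :=
  p.origin < p.vals.length ∧ p.originVal < p.vals.length ∧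
  ∀ j, j < p.vals.length → j ≠ p.origin → p.valAt j ≠ p.originVal

lemma rank_lt_rank {L : List ℚ} {y y' : ℚ} (hy : y ∈ L) (hlt : y < y') :
    (L.filter (fun z => decide (z < y))).length <
      (L.filter (fun z => decide (z < y'))).length := by
  have hsub : L.filter (fun z => decide (z < y)) =
      (L.filter (fun z => decide (z < y'))).filter (fun z => decide (z < y)) := by
    rw [List.filter_filter]
    apply List.filter_congr
    intro z _
    by_cases hz : z < y
    · simp [hz, lt_trans hz hlt]
    · simp [hz]
  rw [hsub]
  exact List.length_filter_lt_length_iff_exists.2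
    ⟨y, List.mem_filter.2 ⟨hy, by simp [hlt]⟩, by simp⟩

lemma rank_lt_iff {L : List ℚ} {y y' : ℚ} (hy : y ∈ L) (hy' : y' ∈ L) :
    ((L.filter (fun z => decide (z < y))).length <
      (L.filter (fun z => decide (z < y'))).length) ↔ y < y' := by
  constructor
  · intro h
    by_contra hc
    push_neg at hc
    rcases eq_or_lt_of_le hc with rfl | hlt
    · exact absurd h (lt_irrefl _)
    · exact absurd (lt_trans h (rank_lt_rank hy' hlt)) (lt_irrefl _)
  · exact rank_lt_rank hy

lemma toCPerm_spec {pts : List (ℚ × ℚ)} (h0 : ((0:ℚ),(0:ℚ)) ∈ pts)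
    (hx : (pts.map Prod.fst).Nodup) (hy : (pts.map Prod.snd).Nodup) :
    OK (toCPerm pts) ∧
    ∀ c i, (toCPerm pts).InQuadrant c i →
      ∃ pt ∈ pts, pt ≠ ((0:ℚ),(0:ℚ)) ∧ quadOf pt = c := by
  classical
  set ys := pts.map Prod.snd with hys
  set rank : ℚ → ℕ := fun y => (ys.filter (fun z => decide (z < y))).length with hrank
  set s := pts.mergeSort (fun a b => decide (a.1 ≤ b.1)) with hs
  have hvals : (toCPerm pts).vals = s.map (fun pt => rank pt.2) := rfl
  have hperm : s.Perm pts := List.mergeSort_perm pts _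
  have hslen : s.length = pts.length := hperm.length_eq
  have hvlen : (toCPerm pts).vals.length = s.length := by rw [hvals, List.length_map]
  have hsx : (s.map Prod.fst).Nodup := ((hperm.map Prod.fst).nodup_iff).2 hx
  have hsy : (s.map Prod.snd).Nodup := ((hperm.map Prod.snd).nodup_iff).2 hy
  have hsnodup : s.Nodup := List.Nodup.of_map Prod.fst hsx
  have hsorted : s.Pairwise (fun a b : ℚ × ℚ => a.1 ≤ b.1) := by
    have h1 := List.pairwise_mergeSort (le := fun a b : ℚ × ℚ => decide (a.1 ≤ b.1))
      (fun a b c hab hbc => by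
        simp only [decide_eq_true_eq] at *; exact le_trans hab hbc)
      (fun a b => by
        simp only [Bool.or_eq_true, decide_eq_true_eq]; exact le_total _ _) pts
    rw [← hs] at h1
    exact h1.imp (fun {a b} h => by simpa using h)
  have hne : s.Pairwise (fun a b : ℚ × ℚ => a.1 ≠ b.1) := List.pairwise_map.1 hsx
  have hmono : ∀ i j (hi : i < s.length) (hj : j < s.length), i < j → s[i].1 < s[j].1 := by
    intro i j hi hj hij
    exact lt_of_le_of_ne (List.pairwise_iff_getElem.1 hsorted i j hi hj hij)
      (List.pairwise_iff_getElem.1 hne i j hi hj hij)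
  obtain ⟨k, hk, hsk⟩ := List.mem_iff_getElem.1 (hperm.mem_iff.2 h0)
  have hsk1 : s[k].1 = 0 := by rw [hsk]
  have hsk2 : s[k].2 = 0 := by rw [hsk]
  -- origin is k
  have horigin : (toCPerm pts).origin = k := by
    show ((pts.map Prod.fst).filter (fun x => decide (x < 0))).length = k
    have h1 : ((pts.map Prod.fst).filter (fun x => decide (x < 0))).length =
        ((s.map Prod.fst).filter (fun x => decide (x < 0))).length :=
      (((hperm.map Prod.fst).symm).filter _).length_eq
    rw [h1, List.filter_map, List.length_map]
    have hsplit : s = s.take k ++ s[k] :: s.drop (k+1) := by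
      rw [← List.drop_eq_getElem_cons hk, List.take_append_drop]
    have h2 : s.filter ((fun x => decide (x < 0)) ∘ Prod.fst) =
        (s.take k).filter ((fun x => decide (x < 0)) ∘ Prod.fst) ++
        (s[k] :: s.drop (k+1)).filter ((fun x => decide (x < 0)) ∘ Prod.fst) := by
      conv_lhs => rw [hsplit]
      rw [List.filter_append]
    have htake : (s.take k).filter ((fun x => decide (x < 0)) ∘ Prod.fst) = s.take k := by
      apply List.filter_eq_self.2
      intro a ha
      obtain ⟨i, hi, hai⟩ := List.mem_iff_getElem.1 ha
      have hilen : i < k := lt_of_lt_of_le hi (by simp [List.length_take])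
      have : a.1 < 0 := by
        rw [← hai, List.getElem_take, ← hsk1]
        exact hmono i k (lt_trans hilen hk) hk hilen
      simpa using this
    have hdrop : (s[k] :: s.drop (k+1)).filter ((fun x => decide (x < 0)) ∘ Prod.fst) = [] := by
      apply List.filter_eq_nil_iff.2
      intro a ha
      rcases List.mem_cons.1 ha with rfl | ha
      · simp [hsk1]
      · obtain ⟨i, hi, hai⟩ := List.mem_iff_getElem.1 ha
        have hik : k + 1 + i < s.length := by
          have := hi; simp [List.length_drop] at this; omega
        have h3 : (s.drop (k+1))[i] = s[k+1+i]'hik := by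
          rw [List.getElem_drop]
        have : 0 < a.1 := by
          rw [← hai, h3, ← hsk1]
          exact hmono k (k+1+i) hk hik (by omega)
        simp only [Function.comp_apply, decide_eq_true_eq]
        exact not_lt.2 (le_of_lt this)
    rw [h2, htake, hdrop, List.length_append, List.length_nil, List.length_take]
    omega
  have hvalAt : ∀ i (hi : i < s.length), (toCPerm pts).valAt i = rank (s[i]'hi).2 := by
    intro i hi
    show (toCPerm pts).vals.getD i 0 = rank s[i].2
    rw [hvals, List.getD_eq_getElem _ _ (by simpa using hi), List.getElem_map]
  have hmem2 : ∀ i (hi : i < s.length), s[i].2 ∈ ys := by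
    intro i hi
    exact List.mem_map.2 ⟨s[i], hperm.mem_iff.1 (List.getElem_mem hi), rfl⟩
  have h0ys : (0:ℚ) ∈ ys := List.mem_map.2 ⟨(0,0), h0, rfl⟩
  have horiginVal : (toCPerm pts).originVal = rank 0 := by
    show (toCPerm pts).valAt (toCPerm pts).origin = rank 0
    rw [horigin, hvalAt k hk, hsk2]
  have hOK : OK (toCPerm pts) := by
    refine ⟨by rw [horigin, hvlen]; exact hk, ?_, ?_⟩
    · rw [horiginVal, hvlen, hslen]
      have : (ys.filter (fun z => decide (z < 0))).length < ys.length :=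
        List.length_filter_lt_length_iff_exists.2 ⟨0, h0ys, by simp⟩
      simpa [hrank, hys] using this
    · intro j hj hjo
      rw [hvlen] at hj
      rw [horigin] at hjo
      rw [hvalAt j hj, horiginVal]
      have hne2 : s[j].2 ≠ 0 := by
        rw [← hsk2]
        intro hc
        apply hjo
        have := (List.Nodup.getElem_inj_iff hsy (i := j) (hi := by simpa using hj)
          (j := k) (hj := by simpa using hk))
        simp only [List.getElem_map] at this
        exact this.1 hc
      rcases lt_or_gt_of_ne hne2 with hlt | hgt
      · exact ne_of_lt (rank_lt_rank (hmem2 j hj) hlt)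
      · exact ne_of_gt (rank_lt_rank h0ys hgt)
  refine ⟨hOK, ?_⟩
  intro c i hq
  obtain ⟨hilen, hine, hcase⟩ := hq
  rw [hvlen] at hilen
  rw [horigin] at hine
  have hptmem : s[i] ∈ pts := hperm.mem_iff.1 (List.getElem_mem hilen)
  have hptne : s[i] ≠ ((0:ℚ),(0:ℚ)) := by
    rw [← hsk]
    intro hc
    exact hine ((List.Nodup.getElem_inj_iff hsnodup).1 hc)
  refine ⟨s[i], hptmem, hptne, ?_⟩
  have hxpos : k < i → 0 < s[i].1 := fun h => by
    rw [← hsk1]; exact hmono k i hk hilen h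
  have hxneg : i < k → s[i].1 < 0 := fun h => by
    rw [← hsk1]; exact hmono i k hilen hk h
  have hypos : (toCPerm pts).originVal < (toCPerm pts).valAt i → 0 < s[i].2 := by
    rw [horiginVal, hvalAt i hilen]
    intro h
    exact (rank_lt_iff h0ys (hmem2 i hilen)).1 h
  have hyneg : (toCPerm pts).valAt i < (toCPerm pts).originVal → s[i].2 < 0 := by
    rw [horiginVal, hvalAt i hilen]
    intro h
    exact (rank_lt_iff (hmem2 i hilen) h0ys).1 h
  rcases hcase with ⟨rfl, hpos, hval⟩ | ⟨rfl, hpos, hval⟩ | ⟨rfl, hpos, hval⟩ | ⟨rfl, hpos, hval⟩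
  · rw [horigin] at hpos
    simp [quadOf, hxpos hpos, hypos hval]
  · rw [horigin] at hpos
    simp [quadOf, not_lt.2 (le_of_lt (hxneg hpos)), hypos hval]
  · rw [horigin] at hpos
    simp [quadOf, not_lt.2 (le_of_lt (hxneg hpos)), not_lt.2 (le_of_lt (hyneg hval))]
  · rw [horigin] at hpos
    simp [quadOf, hxpos hpos, not_lt.2 (le_of_lt (hyneg hval))]

end PinProof

namespace PinProof

lemma getD_map_nat (f : ℕ → ℕ) (l : List ℕ) {n : ℕ} (h : n < l.length) :
    (l.map f).getD n 0 = f (l.getD n 0) := by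
  rw [List.getD_eq_getElem _ _ (by simpa using h), List.getD_eq_getElem _ _ h,
    List.getElem_map]

lemma getD_take (l : List ℕ) {m j : ℕ} (h : j < m) (h2 : j < l.length) :
    (l.take m).getD j 0 = l.getD j 0 := by
  rw [List.getD_eq_getElem _ _ (by simp [List.length_take]; omega), List.getElem_take,
    List.getD_eq_getElem _ _ h2]

lemma getD_drop (l : List ℕ) {m j : ℕ} (h : m + j < l.length) :
    (l.drop m).getD j 0 = l.getD (m + j) 0 := by
  rw [List.getD_eq_getElem _ _ (by simp [List.length_drop]; omega),
      List.getD_eq_getElem _ _ h]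
  exact List.getElem_drop

lemma boxSum_vals (a b : CPerm) : (CPerm.boxSum a b).vals =
    (b.vals.take b.origin).map
      (fun u => if u < b.originVal then u else u + (a.vals.length - 1)) ++
    a.vals.map (· + b.originVal) ++
    (b.vals.drop (b.origin + 1)).map
      (fun u => if u < b.originVal then u else u + (a.vals.length - 1)) := rfl

lemma boxSum_origin (a b : CPerm) : (CPerm.boxSum a b).origin = b.origin + a.origin := rfl

lemma boxSum_length {a b : CPerm} (hb : b.origin < b.vals.length) :
    (CPerm.boxSum a b).vals.length = b.vals.length + a.vals.length - 1 := by
  rw [boxSum_vals]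
  simp only [List.length_append, List.length_map, List.length_take, List.length_drop]
  omega

lemma boxSum_valAt_left {a b : CPerm} (hb : b.origin < b.vals.length) {j : ℕ}
    (hj : j < b.origin) :
    (CPerm.boxSum a b).valAt j =
      if b.valAt j < b.originVal then b.valAt j else b.valAt j + (a.vals.length - 1) := by
  show ((CPerm.boxSum a b).vals).getD j 0 = _
  rw [boxSum_vals, List.append_assoc,
    List.getD_append _ _ _ _ (by simp only [List.length_map, List.length_take]; omega),
    getD_map_nat _ _ (by simp only [List.length_take]; omega),
    getD_take _ hj (by omega)]
  rfl

lemma boxSum_valAt_mid {a b : CPerm} (hb : b.origin < b.vals.length) {k : ℕ}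
    (hk : k < a.vals.length) :
    (CPerm.boxSum a b).valAt (b.origin + k) = a.valAt k + b.originVal := by
  show ((CPerm.boxSum a b).vals).getD (b.origin + k) 0 = _
  rw [boxSum_vals, List.append_assoc,
    List.getD_append_right _ _ _ _ (by simp only [List.length_map, List.length_take]; omega)]
  have hidx : b.origin + k -
      ((b.vals.take b.origin).map
        (fun u => if u < b.originVal then u else u + (a.vals.length - 1))).length = k := by
    simp only [List.length_map, List.length_take]; omega
  rw [hidx, List.getD_append _ _ _ _ (by simp only [List.length_map]; omega),
    getD_map_nat _ _ hk]
  rfl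

lemma boxSum_valAt_right {a b : CPerm} (ha : 0 < a.vals.length)
    (hb : b.origin < b.vals.length) {j : ℕ}
    (hj1 : b.origin + a.vals.length ≤ j) (hj2 : j < b.vals.length + a.vals.length - 1) :
    (CPerm.boxSum a b).valAt j =
      if b.valAt (j - (a.vals.length - 1)) < b.originVal then b.valAt (j - (a.vals.length - 1))
      else b.valAt (j - (a.vals.length - 1)) + (a.vals.length - 1) := by
  show ((CPerm.boxSum a b).vals).getD j 0 = _
  rw [boxSum_vals, List.append_assoc,
    List.getD_append_right _ _ _ _ (by simp only [List.length_map, List.length_take]; omega)]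
  have hidx : j - ((b.vals.take b.origin).map
      (fun u => if u < b.originVal then u else u + (a.vals.length - 1))).length
      = j - b.origin := by
    simp only [List.length_map, List.length_take]; omega
  rw [hidx, List.getD_append_right _ _ _ _ (by simp only [List.length_map]; omega)]
  have hidx2 : j - b.origin - (a.vals.map (· + b.originVal)).length
      = j - b.origin - a.vals.length := by simp only [List.length_map]
  rw [hidx2, getD_map_nat _ _ (by simp only [List.length_drop]; omega),
    getD_drop _ (by omega)]
  have hidx3 : b.origin + 1 + (j - b.origin - a.vals.length) = j - (a.vals.length - 1) := by
    omega
  rw [hidx3]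
  rfl

lemma boxSum_originVal {a b : CPerm} (ha : a.origin < a.vals.length)
    (hb : b.origin < b.vals.length) :
    (CPerm.boxSum a b).originVal = a.originVal + b.originVal := by
  show (CPerm.boxSum a b).valAt (CPerm.boxSum a b).origin = _
  rw [boxSum_origin, boxSum_valAt_mid hb ha]
  rfl

lemma OK_boxSum {a b : CPerm} (ha : OK a) (hb : OK b) : OK (CPerm.boxSum a b) := by
  obtain ⟨ha1, ha2, ha3⟩ := ha
  obtain ⟨hb1, hb2, hb3⟩ := hb
  have hlen := boxSum_length (a := a) hb1
  have hoV := boxSum_originVal ha1 hb1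
  refine ⟨?_, ?_, ?_⟩
  · rw [hlen, boxSum_origin]; omega
  · rw [hlen, hoV]; omega
  · intro j hj hjo
    rw [hlen] at hj
    rw [boxSum_origin] at hjo
    rw [hoV]
    by_cases hp1 : j < b.origin
    · rw [boxSum_valAt_left hb1 hp1]
      have hbne : b.valAt j ≠ b.originVal := hb3 j (by omega) (by omega)
      split_ifs with h <;> omega
    · by_cases hp2 : j < b.origin + a.vals.length
      · have hk : j - b.origin < a.vals.length := by omega
        have hjeq : j = b.origin + (j - b.origin) := by omega
        rw [hjeq, boxSum_valAt_mid hb1 hk]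
        have := ha3 (j - b.origin) (by omega) (by omega)
        omega
      · rw [boxSum_valAt_right (by omega) hb1 (by omega) (by omega)]
        have hbne : b.valAt (j - (a.vals.length - 1)) ≠ b.originVal :=
          hb3 _ (by omega) (by omega)
        split_ifs with h <;> omega

lemma inQuadrant_boxSum {a b : CPerm} (ha : OK a) (hb : OK b) {c j : ℕ}
    (h : (CPerm.boxSum a b).InQuadrant c j) :
    (∃ i, a.InQuadrant c i) ∨ (∃ i, b.InQuadrant c i) := by
  obtain ⟨ha1, ha2, ha3⟩ := ha
  obtain ⟨hb1, hb2, hb3⟩ := hb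
  obtain ⟨hjlen, hjo, hcase⟩ := h
  rw [boxSum_length hb1] at hjlen
  rw [boxSum_origin] at hjo
  have hoV := boxSum_originVal ha1 hb1
  by_cases hp1 : j < b.origin
  · right
    have hbne : b.valAt j ≠ b.originVal := hb3 j (by omega) (by omega)
    have hval := boxSum_valAt_left (a := a) hb1 hp1
    refine ⟨j, by omega, by omega, ?_⟩
    rcases hcase with ⟨hc, hpos, hv⟩|⟨hc, hpos, hv⟩|⟨hc, hpos, hv⟩|⟨hc, hpos, hv⟩ <;>
      rw [boxSum_origin] at hpos <;> rw [hoV, hval] at hv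
    · omega
    · refine Or.inr (Or.inl ⟨hc, hp1, ?_⟩)
      split_ifs at hv with hsp <;> omega
    · refine Or.inr (Or.inr (Or.inl ⟨hc, hp1, ?_⟩))
      split_ifs at hv with hsp <;> omega
    · omega
  · by_cases hp2 : j < b.origin + a.vals.length
    · left
      have hkl : j - b.origin < a.vals.length := by omega
      have hjeq : j = b.origin + (j - b.origin) := by omega
      have hval : (CPerm.boxSum a b).valAt j = a.valAt (j - b.origin) + b.originVal := by
        conv_lhs => rw [hjeq]
        exact boxSum_valAt_mid hb1 hkl
      refine ⟨j - b.origin, hkl, by omega, ?_⟩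
      rcases hcase with ⟨hc, hpos, hv⟩|⟨hc, hpos, hv⟩|⟨hc, hpos, hv⟩|⟨hc, hpos, hv⟩ <;>
        rw [boxSum_origin] at hpos <;> rw [hoV, hval] at hv
      · exact Or.inl ⟨hc, by omega, by omega⟩
      · exact Or.inr (Or.inl ⟨hc, by omega, by omega⟩)
      · exact Or.inr (Or.inr (Or.inl ⟨hc, by omega, by omega⟩))
      · exact Or.inr (Or.inr (Or.inr ⟨hc, by omega, by omega⟩))
    · right
      have hj' : j - (a.vals.length - 1) < b.vals.length := by omega
      have hjo' : j - (a.vals.length - 1) ≠ b.origin := by omega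
      have hbne := hb3 _ hj' hjo'
      have hval := boxSum_valAt_right (a := a) (j := j) (by omega) hb1 (by omega) (by omega)
      refine ⟨j - (a.vals.length - 1), hj', hjo', ?_⟩
      rcases hcase with ⟨hc, hpos, hv⟩|⟨hc, hpos, hv⟩|⟨hc, hpos, hv⟩|⟨hc, hpos, hv⟩ <;>
        rw [boxSum_origin] at hpos <;> rw [hoV, hval] at hv
      · refine Or.inl ⟨hc, by omega, ?_⟩
        split_ifs at hv with hsp <;> omega
      · omega
      · omega
      · refine Or.inr (Or.inr (Or.inr ⟨hc, by omega, ?_⟩))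
        split_ifs at hv with hsp <;> omega

lemma OK_trivial : OK CPerm.trivial := by
  refine ⟨by simp [CPerm.trivial], ?_, ?_⟩
  · show CPerm.trivial.valAt CPerm.trivial.origin < _
    simp [CPerm.trivial, CPerm.valAt]
  · intro j hj hjo
    simp only [CPerm.trivial, List.length_singleton] at hj hjo
    omega

lemma OK_boxSumList {l : List CPerm} (h : ∀ x ∈ l, OK x) : OK (CPerm.boxSumList l) := by
  induction l with
  | nil => exact OK_trivial
  | cons x l ih =>
    exact OK_boxSum (h x (by simp)) (ih (fun y hy => h y (by simp [hy])))

lemma inQuadrant_boxSumList {l : List CPerm} (h : ∀ x ∈ l, OK x) {c j : ℕ}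
    (hq : (CPerm.boxSumList l).InQuadrant c j) : ∃ x ∈ l, ∃ i, x.InQuadrant c i := by
  induction l generalizing j with
  | nil =>
    obtain ⟨h1, h2, -⟩ := hq
    simp only [CPerm.boxSumList, List.foldr_nil, CPerm.trivial, List.length_singleton] at h1 h2
    omega
  | cons x l ih =>
    have hstep := inQuadrant_boxSum (h x (by simp))
      (OK_boxSumList (fun y hy => h y (by simp [hy]))) hq
    rcases hstep with ⟨i, hi⟩ | ⟨i, hi⟩
    · exact ⟨x, by simp, i, hi⟩
    · obtain ⟨y, hy, i', hi'⟩ := ih (fun y hy => h y (by simp [hy])) hi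
      exact ⟨y, by simp [hy], i', hi'⟩

lemma patternLE_inQuadrant {p P : CPerm} (hp : p.origin < p.vals.length)
    (hle : CPerm.PatternLE p P) {c i : ℕ} (h : p.InQuadrant c i) :
    ∃ j, P.InQuadrant c j := by
  obtain ⟨f, hmono, hbound, hor, hval⟩ := hle
  obtain ⟨hilen, hine, hcase⟩ := h
  refine ⟨f i, hbound i hilen, ?_, ?_⟩
  · rcases lt_or_gt_of_ne hine with hlt | hgt
    · have h2 := hmono i p.origin hilen hp hlt; rw [hor] at h2; omega
    · have h2 := hmono p.origin i hp hilen hgt; rw [hor] at h2; omega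
  · rcases hcase with ⟨hc, hpos, hv⟩|⟨hc, hpos, hv⟩|⟨hc, hpos, hv⟩|⟨hc, hpos, hv⟩
    · refine Or.inl ⟨hc, ?_, ?_⟩
      · have h2 := hmono p.origin i hp hilen hpos; rw [hor] at h2; exact h2
      · have h2 := (hval p.origin i hp hilen).1 hv; rw [hor] at h2; exact h2
    · refine Or.inr (Or.inl ⟨hc, ?_, ?_⟩)
      · have h2 := hmono i p.origin hilen hp hpos; rw [hor] at h2; exact h2
      · have h2 := (hval p.origin i hp hilen).1 hv; rw [hor] at h2; exact h2
    · refine Or.inr (Or.inr (Or.inl ⟨hc, ?_, ?_⟩))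
      · have h2 := hmono i p.origin hilen hp hpos; rw [hor] at h2; exact h2
      · have h2 := (hval i p.origin hilen hp).1 hv; rw [hor] at h2; exact h2
    · refine Or.inr (Or.inr (Or.inr ⟨hc, ?_, ?_⟩))
      · have h2 := hmono p.origin i hp hilen hpos; rw [hor] at h2; exact h2
      · have h2 := (hval i p.origin hilen hp).1 hv; rw [hor] at h2; exact h2

end PinProof

namespace PinProof

def Qv (q : ℕ) (f : ℕ → PinLetter) (i : ℕ) : ℕ := quadWalk q (seqPrefix f (i - 1))

def Rec (q : ℕ) (f : ℕ → PinLetter) (c : ℕ) : Prop :=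
  ∀ N, ∃ i, N ≤ i ∧ 1 ≤ i ∧ Qv q f i = c

lemma seqPrefix_concat (f : ℕ → PinLetter) (n : ℕ) :
    seqPrefix f (n + 1) = seqPrefix f n ++ [f n] := by
  simp [seqPrefix, List.range_succ]

lemma seqPrefix_add (f : ℕ → PinLetter) (m t : ℕ) :
    seqPrefix f (m + t) = seqPrefix f m ++ (List.range t).map (fun s => f (m + s)) := by
  simp only [seqPrefix, List.range_add, List.map_append, List.map_map]
  rfl

lemma pinAlt_seqPrefix {q : ℕ} {f : ℕ → PinLetter} (hw : IsPinSeq q f) :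
    ∀ n, PinAlt (seqPrefix f n) := by
  intro n
  induction n with
  | zero => simp [seqPrefix, PinAlt, List.Chain']
  | succ n ih =>
    rw [seqPrefix_concat, PinAlt, List.Chain', List.isChain_append]
    refine ⟨ih, List.isChain_singleton _, ?_⟩
    intro x hx y hy
    cases n with
    | zero => simp [seqPrefix] at hx
    | succ m =>
      rw [seqPrefix_concat, List.getLast?_concat] at hx
      simp only [Option.mem_def, Option.some.injEq] at hx
      simp only [List.head?_cons, Option.mem_def, Option.some.injEq] at hy
      subst hx; subst hy
      exact hw.2.2 m

lemma Qv_succ {q : ℕ} {f : ℕ → PinLetter} (i : ℕ) (hi : 1 ≤ i) :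
    Qv q f (i + 1) = qtrans (Qv q f i) (f (i - 1)) := by
  unfold Qv
  rw [show i + 1 - 1 = (i - 1) + 1 from by omega, seqPrefix_concat, quadWalk_append]
  rfl

lemma QvEq {q : ℕ} {f : ℕ → PinLetter} (hw : IsPinSeq q f) (i : ℕ) :
    quadOf (seqPoint q f i) = Qv q f i :=
  (pin_invariant hw.1 hw.2.1 (seqPrefix f (i-1)) (pinAlt_seqPrefix hw (i-1))).2.2.2.2.2

lemma Qv_range {q : ℕ} {f : ℕ → PinLetter} (hw : IsPinSeq q f) (i : ℕ) :
    1 ≤ Qv q f i ∧ Qv q f i ≤ 4 := quadWalk_range hw.1 hw.2.1 _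

lemma walk_between {q : ℕ} {f : ℕ → PinLetter} {c c' : ℕ} (hcc : c ≠ c')
    (hstep : ∀ a, qtrans c a ≠ c') :
    ∀ n i, 1 ≤ i → Qv q f i = c → Qv q f (i + n) = c' →
      ∃ k, i ≤ k ∧ k ≤ i + n ∧ Qv q f k ≠ c ∧ Qv q f k ≠ c' := by
  intro n
  induction n with
  | zero =>
    intro i hi h1 h2
    rw [Nat.add_zero] at h2
    exact absurd (h1.symm.trans h2) hcc
  | succ n ih =>
    intro i hi h1 h2
    have hs := Qv_succ (q := q) (f := f) i hi
    by_cases hc1 : Qv q f (i+1) = c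
    · obtain ⟨k, hk1, hk2, hk3, hk4⟩ := ih (i+1) (by omega) hc1
        (by rw [show i+1+n = i+(n+1) from by omega]; exact h2)
      exact ⟨k, by omega, by omega, hk3, hk4⟩
    · refine ⟨i+1, by omega, by omega, hc1, ?_⟩
      rw [hs, h1]
      exact hstep _

lemma pinPerm_nil_1 : pinPerm 1 [] = CPerm.mu 1 := by
  simp [pinPerm, pinPts, toCPerm, List.mergeSort, List.merge, firstPt, CPerm.mu]
lemma pinPerm_nil_2 : pinPerm 2 [] = CPerm.mu 2 := by
  simp [pinPerm, pinPts, toCPerm, List.mergeSort, List.merge, firstPt, CPerm.mu]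
lemma pinPerm_nil_3 : pinPerm 3 [] = CPerm.mu 3 := by
  simp [pinPerm, pinPts, toCPerm, List.mergeSort, List.merge, firstPt, CPerm.mu]
lemma pinPerm_nil_4 : pinPerm 4 [] = CPerm.mu 4 := by
  simp [pinPerm, pinPts, toCPerm, List.mergeSort, List.merge, firstPt, CPerm.mu]

lemma rec_mu {q : ℕ} {f : ℕ → PinLetter} (hw : IsPinSeq q f) {c : ℕ}
    (hc : c = 1 ∨ c = 2 ∨ c = 3 ∨ c = 4) (hr : Rec q f c) :
    CPerm.mu c ∈ BoxInterior q f := by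
  have hfac : RecurrentFactor q f (c, []) := by
    intro N
    obtain ⟨i, hNi, hi1, hQ⟩ := hr N
    refine ⟨i, hNi, hi1, ?_, fun t ht => absurd ht (by simp)⟩
    show c = quadOf (seqPoint q f i)
    rw [QvEq hw i]
    exact hQ.symm
  refine ⟨?_, [CPerm.mu c], ?_, ?_⟩
  · rcases hc with rfl|rfl|rfl|rfl <;> · unfold CPerm.IsValid; decide
  · intro x hx
    simp only [List.mem_singleton] at hx
    subst hx
    refine ⟨(c, []), hfac, ?_⟩
    rcases hc with rfl|rfl|rfl|rfl
    · exact pinPerm_nil_1.symm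
    · exact pinPerm_nil_2.symm
    · exact pinPerm_nil_3.symm
    · exact pinPerm_nil_4.symm
  · have hbs : CPerm.boxSumList [CPerm.mu c] = CPerm.mu c := by
      rcases hc with rfl|rfl|rfl|rfl <;> decide
    rw [hbs]
    exact ⟨fun i => i, fun _ _ _ _ h => h, fun i h => h, rfl, fun _ _ _ _ => Iff.rfl⟩

lemma pinStep_eq_cons (pts : List (ℚ × ℚ)) (a : PinLetter) :
    ∃ np, pinStep pts a = np :: pts := by
  cases a <;> exact ⟨_, rfl⟩

lemma mem_pinPts_decomp {q : ℕ} {w : List PinLetter} {pt : ℚ × ℚ}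
    (hmem : pt ∈ pinPts q w) (hne : pt ≠ ((0:ℚ),(0:ℚ))) :
    ∃ t, t ≤ w.length ∧ pt = (pinPts q (w.take t)).headD (0,0) := by
  induction w using List.reverseRecOn with
  | nil =>
    have : pt ∈ [firstPt q, ((0:ℚ),(0:ℚ))] := hmem
    rcases List.mem_cons.1 this with rfl | h2
    · exact ⟨0, le_refl _, rfl⟩
    · simp only [List.mem_singleton] at h2
      exact absurd h2 hne
  | append_singleton w a ih =>
    rw [pinPts_concat] at hmem
    obtain ⟨np, hnp⟩ := pinStep_eq_cons (pinPts q w) a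
    rw [hnp] at hmem
    rcases List.mem_cons.1 hmem with rfl | hmem'
    · refine ⟨w.length + 1, by simp, ?_⟩
      rw [show w.length + 1 = (w ++ [a]).length from by simp, List.take_length,
        pinPts_concat, hnp, List.headD_cons]
    · obtain ⟨t, ht, hpt⟩ := ih hmem'
      exact ⟨t, by simp; omega, by rw [List.take_append_of_le_length ht]; exact hpt⟩

lemma mu_rec {q : ℕ} {f : ℕ → PinLetter} (hw : IsPinSeq q f) {c : ℕ}
    (hc : c = 1 ∨ c = 2 ∨ c = 3 ∨ c = 4)
    (h : CPerm.mu c ∈ BoxInterior q f) : Rec q f c := by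
  obtain ⟨hvalid, l, hl, hle⟩ := h
  have hfacOK : ∀ w : ℕ × List PinLetter, RecurrentFactor q f w →
      1 ≤ w.1 ∧ w.1 ≤ 4 ∧ PinAlt w.2 := by
    intro w hrec
    obtain ⟨i, -, hi1, hqof, hlet⟩ := hrec 0
    refine ⟨?_, ?_, ?_⟩
    · rw [hqof]; exact (quadOf_range _).1
    · rw [hqof]; exact (quadOf_range _).2
    · rw [PinAlt, List.Chain', List.isChain_iff_getElem]
      intro t ht
      have hla : w.2.get ⟨t, by omega⟩ = f (i - 1 + t) := by
        rw [List.get_eq_getElem, ← List.getD_eq_getElem w.2 PinLetter.u (by omega)]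
        exact hlet t (by omega)
      have hlb : w.2.get ⟨t+1, by omega⟩ = f (i - 1 + (t+1)) := by
        rw [List.get_eq_getElem, ← List.getD_eq_getElem w.2 PinLetter.u (by omega)]
        exact hlet (t+1) (by omega)
      rw [List.get_eq_getElem] at hla hlb
      rw [hla, hlb, show i - 1 + (t+1) = (i-1+t) + 1 from by omega]
      exact hw.2.2 (i-1+t)
  have hOK : ∀ x ∈ l, OK x := by
    intro x hx
    obtain ⟨w, hrec, rfl⟩ := hl x hx
    obtain ⟨h1, h4, halt⟩ := hfacOK w hrec
    have hinv := pin_invariant h1 h4 w.2 halt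
    exact (toCPerm_spec hinv.1 hinv.2.1 hinv.2.2.1).1
  have hmuq : ∃ i, (CPerm.mu c).InQuadrant c i := by
    rcases hc with rfl|rfl|rfl|rfl
    · exact ⟨1, by unfold CPerm.InQuadrant; decide⟩
    · exact ⟨0, by unfold CPerm.InQuadrant; decide⟩
    · exact ⟨0, by unfold CPerm.InQuadrant; decide⟩
    · exact ⟨1, by unfold CPerm.InQuadrant; decide⟩
  obtain ⟨i0, hi0⟩ := hmuq
  have hmuo : (CPerm.mu c).origin < (CPerm.mu c).vals.length := by
    rcases hc with rfl|rfl|rfl|rfl <;> decide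
  obtain ⟨j0, hj0⟩ := patternLE_inQuadrant hmuo hle hi0
  obtain ⟨x, hx, i1, hi1⟩ := inQuadrant_boxSumList hOK hj0
  obtain ⟨w, hrec, rfl⟩ := hl x hx
  obtain ⟨h1, h4, halt⟩ := hfacOK w hrec
  have hinv := pin_invariant h1 h4 w.2 halt
  obtain ⟨pt, hptmem, hptne, hptquad⟩ :=
    (toCPerm_spec hinv.1 hinv.2.1 hinv.2.2.1).2 c i1 hi1
  obtain ⟨t, ht, hpt⟩ := mem_pinPts_decomp hptmem hptne
  have htake_alt : PinAlt (w.2.take t) := List.IsChain.take halt t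
  have hquadt : quadWalk w.1 (w.2.take t) = c := by
    rw [← (pin_invariant h1 h4 _ htake_alt).2.2.2.2.2, ← hpt, hptquad]
  intro N
  obtain ⟨i, hNi, hi1', hqof, hlet⟩ := hrec N
  refine ⟨i + t, by omega, by omega, ?_⟩
  have hsplit : seqPrefix f (i + t - 1) =
      seqPrefix f (i-1) ++ (List.range t).map (fun s => f ((i-1) + s)) := by
    rw [show i + t - 1 = (i-1) + t from by omega, seqPrefix_add]
  have hB : (List.range t).map (fun s => f ((i-1) + s)) = w.2.take t := by
    apply List.ext_getElem
    · simp only [List.length_map, List.length_range, List.length_take]; omega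
    · intro n h1' h2'
      rw [List.getElem_map, List.getElem_range, List.getElem_take,
        ← List.getD_eq_getElem w.2 PinLetter.u (by simp at h1'; omega)]
      exact (hlet n (by simp at h1'; omega)).symm
  show quadWalk q (seqPrefix f (i + t - 1)) = c
  rw [hsplit, quadWalk_append, hB]
  have hQvi : quadWalk q (seqPrefix f (i-1)) = w.1 := by
    have h5 := QvEq hw i
    unfold Qv at h5
    rw [← h5]
    exact hqof.symm
  rw [hQvi, hquadt]

end PinProof

namespace PinProof

lemma between13 {q : ℕ} {f : ℕ → PinLetter} (hw : IsPinSeq q f)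
    (h1 : CPerm.mu 1 ∈ BoxInterior q f) (h3 : CPerm.mu 3 ∈ BoxInterior q f) :
    CPerm.mu 2 ∈ BoxInterior q f ∨ CPerm.mu 4 ∈ BoxInterior q f := by
  have r1 := mu_rec hw (Or.inl rfl) h1
  have r3 := mu_rec hw (Or.inr (Or.inr (Or.inl rfl))) h3
  have claim : Rec q f 2 ∨ Rec q f 4 := by
    by_contra hcon
    push_neg at hcon
    obtain ⟨hc2, hc4⟩ := hcon
    unfold Rec at hc2 hc4
    push_neg at hc2 hc4
    obtain ⟨N2, hN2⟩ := hc2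
    obtain ⟨N4, hN4⟩ := hc4
    obtain ⟨i, hiN, hi1, hQi⟩ := r1 (max N2 N4 + 1)
    obtain ⟨j, hjN, hj1, hQj⟩ := r3 i
    obtain ⟨k, hk1, hk2, hk3, hk4⟩ := walk_between (q := q) (f := f) (c := 1) (c' := 3)
      (by decide) (fun a => by cases a <;> decide) (j - i) i hi1 hQi
      (by rw [show i + (j - i) = j from by omega]; exact hQj)
    have hkr := Qv_range hw k
    have hk24 : Qv q f k = 2 ∨ Qv q f k = 4 := by omega
    rcases hk24 with h|h
    · exact hN2 k (by omega) (by omega) h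
    · exact hN4 k (by omega) (by omega) h
  rcases claim with h|h
  · exact Or.inl (rec_mu hw (by tauto) h)
  · exact Or.inr (rec_mu hw (by tauto) h)

lemma between24 {q : ℕ} {f : ℕ → PinLetter} (hw : IsPinSeq q f)
    (h2 : CPerm.mu 2 ∈ BoxInterior q f) (h4 : CPerm.mu 4 ∈ BoxInterior q f) :
    CPerm.mu 1 ∈ BoxInterior q f ∨ CPerm.mu 3 ∈ BoxInterior q f := by
  have r2 := mu_rec hw (by tauto) h2
  have r4 := mu_rec hw (by tauto) h4
  have claim : Rec q f 1 ∨ Rec q f 3 := by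
    by_contra hcon
    push_neg at hcon
    obtain ⟨hc1, hc3⟩ := hcon
    unfold Rec at hc1 hc3
    push_neg at hc1 hc3
    obtain ⟨N1, hN1⟩ := hc1
    obtain ⟨N3, hN3⟩ := hc3
    obtain ⟨i, hiN, hi1, hQi⟩ := r2 (max N1 N3 + 1)
    obtain ⟨j, hjN, hj1, hQj⟩ := r4 i
    obtain ⟨k, hk1, hk2, hk3, hk4⟩ := walk_between (q := q) (f := f) (c := 2) (c' := 4)
      (by decide) (fun a => by cases a <;> decide) (j - i) i hi1 hQi
      (by rw [show i + (j - i) = j from by omega]; exact hQj)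
    have hkr := Qv_range hw k
    have hk13 : Qv q f k = 1 ∨ Qv q f k = 3 := by omega
    rcases hk13 with h|h
    · exact hN1 k (by omega) (by omega) h
    · exact hN3 k (by omega) (by omega) h
  rcases claim with h|h
  · exact Or.inl (rec_mu hw (by tauto) h)
  · exact Or.inr (rec_mu hw (by tauto) h)

lemma exists_mu {q : ℕ} {f : ℕ → PinLetter} (hw : IsPinSeq q f) :
    ∃ c, (c = 1 ∨ c = 2 ∨ c = 3 ∨ c = 4) ∧ CPerm.mu c ∈ BoxInterior q f := by
  have hrec : Rec q f 1 ∨ Rec q f 2 ∨ Rec q f 3 ∨ Rec q f 4 := by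
    by_contra hcon
    push_neg at hcon
    obtain ⟨h1, h2, h3, h4⟩ := hcon
    unfold Rec at h1 h2 h3 h4
    push_neg at h1 h2 h3 h4
    obtain ⟨N1, hN1⟩ := h1
    obtain ⟨N2, hN2⟩ := h2
    obtain ⟨N3, hN3⟩ := h3
    obtain ⟨N4, hN4⟩ := h4
    set i := max (max N1 N2) (max N3 N4) + 1 with hi
    have hr := Qv_range hw i
    have e1 := hN1 i (by omega) (by omega)
    have e2 := hN2 i (by omega) (by omega)
    have e3 := hN3 i (by omega) (by omega)
    have e4 := hN4 i (by omega) (by omega)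
    omega
  rcases hrec with h|h|h|h
  · exact ⟨1, by tauto, rec_mu hw (by tauto) h⟩
  · exact ⟨2, by tauto, rec_mu hw (by tauto) h⟩
  · exact ⟨3, by tauto, rec_mu hw (by tauto) h⟩
  · exact ⟨4, by tauto, rec_mu hw (by tauto) h⟩

end PinProof

open PinProof in
/-- If the ⊞-interior of a pin class contains the
single-point permutations in quadrants 1 and 3, it also contains one in
quadrant 2 or 4; consequently every ⊞-interior of a pin class satisfies the
adjacency condition. -/
theorem boxInterior_adjacency (q : ℕ) (f : ℕ → PinLetter) (hw : IsPinSeq q f) :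
    ((CPerm.mu 1 ∈ BoxInterior q f ∧ CPerm.mu 3 ∈ BoxInterior q f) →
      (CPerm.mu 2 ∈ BoxInterior q f ∨ CPerm.mu 4 ∈ BoxInterior q f)) ∧
    CPerm.AdjacencyCondition (BoxInterior q f) := by
  classical
  refine ⟨fun h => between13 hw h.1 h.2, ?_⟩
  have key : ∀ a b : ℕ, (a = 1 ∨ a = 2 ∨ a = 3 ∨ a = 4) → (b = 1 ∨ b = 2 ∨ b = 3 ∨ b = 4) →
      a ≠ b → CPerm.mu a ∈ BoxInterior q f → CPerm.mu b ∈ BoxInterior q f →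
      ∃ u v, CPerm.AdjacentQuadrants u v ∧
        CPerm.mu u ∈ BoxInterior q f ∧ CPerm.mu v ∈ BoxInterior q f := by
    intro a b ha hb hne hA hB
    by_cases hadj2 : CPerm.AdjacentQuadrants a b
    · exact ⟨a, b, hadj2, hA, hB⟩
    · have hopp : (a = 1 ∧ b = 3) ∨ (a = 3 ∧ b = 1) ∨ (a = 2 ∧ b = 4) ∨ (a = 4 ∧ b = 2) := by
        rcases ha with rfl|rfl|rfl|rfl <;> rcases hb with rfl|rfl|rfl|rfl <;>
          first
            | exact absurd rfl hne
            | exact absurd (by unfold CPerm.AdjacentQuadrants; decide) hadj2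
            | tauto
      rcases hopp with ⟨rfl, rfl⟩|⟨rfl, rfl⟩|⟨rfl, rfl⟩|⟨rfl, rfl⟩
      · rcases between13 hw hA hB with h|h
        · exact ⟨2, 1, by unfold CPerm.AdjacentQuadrants; decide, h, hA⟩
        · exact ⟨4, 1, by unfold CPerm.AdjacentQuadrants; decide, h, hA⟩
      · rcases between13 hw hB hA with h|h
        · exact ⟨2, 3, by unfold CPerm.AdjacentQuadrants; decide, h, hA⟩
        · exact ⟨4, 3, by unfold CPerm.AdjacentQuadrants; decide, h, hA⟩
      · rcases between24 hw hA hB with h|h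
        · exact ⟨1, 2, by unfold CPerm.AdjacentQuadrants; decide, h, hA⟩
        · exact ⟨3, 2, by unfold CPerm.AdjacentQuadrants; decide, h, hA⟩
      · rcases between24 hw hB hA with h|h
        · exact ⟨1, 4, by unfold CPerm.AdjacentQuadrants; decide, h, hA⟩
        · exact ⟨3, 4, by unfold CPerm.AdjacentQuadrants; decide, h, hA⟩
  by_cases hadj : ∃ u v, CPerm.AdjacentQuadrants u v ∧
      CPerm.mu u ∈ BoxInterior q f ∧ CPerm.mu v ∈ BoxInterior q f
  · exact Or.inr hadj
  · left
    obtain ⟨c₀, hc₀4, hc₀⟩ := exists_mu hw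
    refine ⟨c₀, ⟨by rcases hc₀4 with rfl|rfl|rfl|rfl <;> simp, hc₀⟩, ?_⟩
    rintro y ⟨hy4, hyS⟩
    have hy4' : y = 1 ∨ y = 2 ∨ y = 3 ∨ y = 4 := by
      simpa [Set.mem_insert_iff] using hy4
    by_contra hne
    exact hadj (key y c₀ hy4' hc₀4 hne hyS hc₀)
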